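/- (Integral turnpike estimate underlying Theorem 3.9.) Assume: H ∈ C²(𝕏, ℝ), 𝕐 := H_x(𝕏) is open, H_x : 𝕏 → 𝕐 is a C¹-diffeomorphism; S(x) = eᵀx with e ∈ ℝⁿ \ {0}; ⋂_{k=1}^N (J_k e)^⊥ ∩ 𝕐 ≠ ∅. Fix a compact set K ⊆ 𝕏, α₁, α₂, T₀ > 0, and a constant C₁ ≥ 0, and define ℓ(x,u) = (α₁ g(x)ᵀH_x(x) − α₂ T₀ g(x)ᵀS_x(x))ᵀ u. Then there exists C ≥ 0, depending only on K, C₁, α₁, α₂, T₀ and the system data (but not on t_f), such that for every t_f > 0 and every continuously differentiable solution x : [0,t_f] → 𝕏 of the RIPHS state equation with continuous control u satisfying x(t) ∈ K for all t ∈ [0,t_f] and ∫₀^{t_f} ℓ(x(t),u(t)) dt ≤ C₁, one has ∫₀^{t_f} dist(x(t), 𝒯)² dt ≤ C. -/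

import Mathlib

open Set Matrix Metric

/-- Matrix–vector multiplication on Euclidean space. -/
noncomputable def mv {a b : ℕ} (A : Matrix (Fin a) (Fin b) ℝ)
    (x : EuclideanSpace ℝ (Fin b)) : EuclideanSpace ℝ (Fin a) :=
  Matrix.toEuclideanLin A x

/-- The Poisson bracket `{S,H}_{J_k}(x) = eᵀ J_k H_x(x)` for the linear entropy `S(x) = eᵀx`. -/
noncomputable def brk {n : ℕ} (J : Matrix (Fin n) (Fin n) ℝ)
    (e Hx : EuclideanSpace ℝ (Fin n)) : ℝ :=
  inner ℝ e (mv J Hx)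

/-!
Along a trajectory the storage function `F = α₁ H - α₂ T₀ S` obeys the power balance
`d/dt F(x) = ℓ(x, u) - α₂ T₀ Σₖ γₖ(x) {S,H}_{Jₖ}(x)²`, because `J₀ + Σₖ γₖ {S,H}_{Jₖ} Jₖ` is
skew-symmetric and `e` is a Casimir of `J₀`. Integrating, the dissipation is bounded by
`C₁ + 2 max_K |F|`, whatever `t_f` is.

On the other hand, on the compact set `K` the distance to `𝒯` is bounded by a multiple of the
norm of the bracket vector `({S,H}_{Jₖ}(x))ₖ`, which is linear in `H_x(x)`. Near a point where all
brackets vanish, project `H_x(x)` orthogonally onto the kernel of this linear map and pull back by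
the locally Lipschitz inverse of `H_x`; elsewhere the brackets are locally bounded below, while
the distance is bounded on `K`.
As `γₖ` is bounded below on `K`, the dissipation controls `∫ dist(x, 𝒯)²`.
-/

open Filter Topology
open scoped RealInnerProductSpace NNReal

section StructureMatrices

variable {a b N : ℕ}

theorem mv_add (A B : Matrix (Fin a) (Fin b) ℝ) (x : EuclideanSpace ℝ (Fin b)) :
    mv (A + B) x = mv A x + mv B x := by
  simp [mv]

theorem mv_neg (A : Matrix (Fin a) (Fin b) ℝ) (x : EuclideanSpace ℝ (Fin b)) :
    mv (-A) x = -mv A x := by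
  simp [mv]

theorem mv_sum_smul (c : Fin N → ℝ) (A : Fin N → Matrix (Fin a) (Fin b) ℝ)
    (x : EuclideanSpace ℝ (Fin b)) : mv (∑ k, c k • A k) x = ∑ k, c k • mv (A k) x := by
  simp [mv]

@[fun_prop]
theorem continuous_mv : Continuous fun p : Matrix (Fin a) (Fin b) ℝ × EuclideanSpace ℝ (Fin b) =>
    mv p.1 p.2 := by
  simp only [mv, toEuclideanLin, toLpLin_apply]
  fun_prop

@[fun_prop]
theorem continuous_brk (J : Matrix (Fin a) (Fin a) ℝ) (e : EuclideanSpace ℝ (Fin a)) :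
    Continuous (brk J e) := by
  unfold brk
  fun_prop

theorem inner_mv (A : Matrix (Fin a) (Fin b) ℝ) (v : EuclideanSpace ℝ (Fin a))
    (w : EuclideanSpace ℝ (Fin b)) : ⟪v, mv A w⟫ = ⟪mv Aᵀ v, w⟫ := by
  rw [mv, mv, ← conjTranspose_eq_transpose_of_trivial, toEuclideanLin_conjTranspose_eq_adjoint,
    LinearMap.adjoint_inner_left]

theorem inner_mv_self_eq_zero_of_transpose_eq_neg {A : Matrix (Fin a) (Fin a) ℝ} (hA : Aᵀ = -A)
    (w : EuclideanSpace ℝ (Fin a)) : ⟪w, mv A w⟫ = 0 := by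
  have h := inner_mv A w w
  rw [hA, mv_neg, inner_neg_left, real_inner_comm] at h
  rw [real_inner_comm]
  linarith

theorem inner_mv_eq_zero_of_mv_eq_zero {A : Matrix (Fin a) (Fin a) ℝ} (hA : Aᵀ = -A)
    {e : EuclideanSpace ℝ (Fin a)} (he : mv A e = 0) (w : EuclideanSpace ℝ (Fin a)) :
    ⟪e, mv A w⟫ = 0 := by
  rw [inner_mv, hA, mv_neg, he, neg_zero, inner_zero_left]

theorem transpose_add_sum_smul_eq_neg {J0 : Matrix (Fin a) (Fin a) ℝ} (hJ0 : J0ᵀ = -J0)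
    {J : Fin N → Matrix (Fin a) (Fin a) ℝ} (hJ : ∀ k, (J k)ᵀ = -J k) (c : Fin N → ℝ) :
    (J0 + ∑ k, c k • J k)ᵀ = -(J0 + ∑ k, c k • J k) := by
  simp only [transpose_add, transpose_sum, transpose_smul, hJ0, hJ, smul_neg,
    Finset.sum_neg_distrib, neg_add]

variable {J0 : Matrix (Fin a) (Fin a) ℝ} {J : Fin N → Matrix (Fin a) (Fin a) ℝ}
  {e : EuclideanSpace ℝ (Fin a)}

theorem inner_mv_riphs_self_eq_zero (hJ0 : J0ᵀ = -J0) (hJ : ∀ k, (J k)ᵀ = -J k) (γ : Fin N → ℝ)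
    (y : EuclideanSpace ℝ (Fin a)) :
    ⟪y, mv (J0 + ∑ k, (γ k * brk (J k) e y) • J k) y⟫ = 0 :=
  inner_mv_self_eq_zero_of_transpose_eq_neg (transpose_add_sum_smul_eq_neg hJ0 hJ _) y

theorem inner_mv_riphs_eq_sum_mul_brk_sq (hJ0 : J0ᵀ = -J0) (he : mv J0 e = 0) (γ : Fin N → ℝ)
    (y : EuclideanSpace ℝ (Fin a)) :
    ⟪e, mv (J0 + ∑ k, (γ k * brk (J k) e y) • J k) y⟫ = ∑ k, γ k * brk (J k) e y ^ 2 := by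
  rw [mv_add, mv_sum_smul, inner_add_right, inner_mv_eq_zero_of_mv_eq_zero hJ0 he, zero_add,
    inner_sum]
  exact Finset.sum_congr rfl fun k _ => by rw [real_inner_smul_right, ← brk]; ring

theorem power_balance {m : ℕ} (hJ0 : J0ᵀ = -J0) (he : mv J0 e = 0) (hJ : ∀ k, (J k)ᵀ = -J k)
    (γ : Fin N → ℝ) (g : Matrix (Fin a) (Fin m) ℝ) (y : EuclideanSpace ℝ (Fin a))
    (u : EuclideanSpace ℝ (Fin m)) (α c : ℝ) :
    α * ⟪y, mv (J0 + ∑ k, (γ k * brk (J k) e y) • J k) y + mv g u⟫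
        - c * ⟪e, mv (J0 + ∑ k, (γ k * brk (J k) e y) • J k) y + mv g u⟫
      = ⟪α • mv gᵀ y - c • mv gᵀ e, u⟫ - c * ∑ k, γ k * brk (J k) e y ^ 2 := by
  rw [inner_add_right, inner_add_right, inner_mv_riphs_self_eq_zero hJ0 hJ,
    inner_mv_riphs_eq_sum_mul_brk_sq hJ0 he, inner_mv g y u, inner_mv g e u, inner_sub_left,
    real_inner_smul_left, real_inner_smul_left]
  ring

end StructureMatrices

section DistanceEstimates

theorem LinearMap.exists_norm_sub_starProjection_ker_le {𝕜 E F : Type*} [RCLike 𝕜]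
    [NormedAddCommGroup E] [InnerProductSpace 𝕜 E] [FiniteDimensional 𝕜 E]
    [NormedAddCommGroup F] [NormedSpace 𝕜 F] (B : E →ₗ[𝕜] F) :
    ∃ c, ∀ y, ‖y - (LinearMap.ker B).starProjection y‖ ≤ c * ‖B y‖ := by
  set V := LinearMap.ker B
  have hinj : LinearMap.ker (B.domRestrict Vᗮ) = ⊥ := by
    rw [LinearMap.ker_eq_bot']
    exact fun w hw => Subtype.ext (Submodule.disjoint_def.1 V.orthogonal_disjoint w hw w.2)
  obtain ⟨c, -, hc⟩ := (B.domRestrict Vᗮ).exists_antilipschitzWith hinj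
  refine ⟨c, fun y => ?_⟩
  have hB : B (y - V.starProjection y) = B y := by
    rw [map_sub, LinearMap.mem_ker.1 (V.starProjection_apply_mem y), sub_zero]
  simpa [hB] using hc.le_mul_norm (map_zero _) ⟨_, V.sub_starProjection_mem_orthogonal y⟩

theorem ContDiffAt.exists_eventually_infDist_le_mul_norm_sub_starProjection
    {E G : Type*} [NormedAddCommGroup E] [InnerProductSpace ℝ E] [NormedAddCommGroup G]
    [NormedSpace ℝ G] {V : Submodule ℝ E} [V.HasOrthogonalProjection] {g : E → G} {y₀ : E}
    {T : Set G} (hg : ContDiffAt ℝ 1 g y₀) (hy₀ : y₀ ∈ V) (hT : ∀ᶠ z in 𝓝 y₀, z ∈ V → g z ∈ T) :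
    ∃ L : ℝ≥0, ∀ᶠ y in 𝓝 y₀, infDist (g y) T ≤ L * ‖y - V.starProjection y‖ := by
  obtain ⟨L, t, ht, hL⟩ := hg.exists_lipschitzOnWith
  obtain ⟨ρ, hρ, hball⟩ := Metric.mem_nhds_iff.1 (inter_mem ht hT)
  refine ⟨L, mem_of_superset (ball_mem_nhds y₀ hρ) fun y hy => ?_⟩
  have hPy : V.starProjection y ∈ ball y₀ ρ := by
    rw [mem_ball, dist_eq_norm, ← V.starProjection_eq_self_iff.2 hy₀, ← map_sub]
    exact (V.norm_starProjection_apply_le _).trans_lt (mem_ball_iff_norm.1 hy)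
  calc infDist (g y) T ≤ ‖g y - g (V.starProjection y)‖ :=
        (infDist_le_dist_of_mem ((hball hPy).2 (V.starProjection_apply_mem y))).trans_eq
          (dist_eq_norm _ _)
    _ ≤ L * ‖y - V.starProjection y‖ := hL.norm_sub_le (hball hy).1 (hball hPy).1

variable {X : Type*} [TopologicalSpace X] {K : Set X} {a b : X → ℝ}

theorem IsCompact.exists_forall_le_mul (hK : IsCompact K) (hb : ∀ p, 0 ≤ b p)
    (hloc : ∀ p ∈ K, ∃ c, ∀ᶠ q in 𝓝[K] p, a q ≤ c * b q) :
    ∃ c, 0 ≤ c ∧ ∀ p ∈ K, a p ≤ c * b p := by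
  have mono {c d : ℝ} (hcd : c ≤ d) {p : X} (h : a p ≤ c * b p) : a p ≤ d * b p :=
    h.trans (mul_le_mul_of_nonneg_right hcd (hb p))
  refine hK.induction_on (p := fun s => ∃ c, 0 ≤ c ∧ ∀ p ∈ s, a p ≤ c * b p)
    ⟨0, le_rfl, by simp⟩ ?_ ?_ ?_
  · rintro s t hst ⟨c, hc, h⟩
    exact ⟨c, hc, fun p hp => h p (hst hp)⟩
  · rintro s t ⟨c, hc, hs⟩ ⟨d, -, ht⟩
    refine ⟨max c d, le_max_of_le_left hc, ?_⟩
    rintro p (hp | hp)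
    · exact mono (le_max_left c d) (hs p hp)
    · exact mono (le_max_right c d) (ht p hp)
  · intro p hp
    obtain ⟨c, hc⟩ := hloc p hp
    exact ⟨_, hc, max c 0, le_max_right c 0, fun q hq => mono (le_max_left c 0) hq⟩

theorem ContinuousWithinAt.exists_eventually_le_mul_of_pos {p : X}
    (hb : ContinuousWithinAt b K p) (hp : 0 < b p) (ha : BddAbove (a '' K)) :
    ∃ c, ∀ᶠ q in 𝓝[K] p, a q ≤ c * b q := by
  obtain ⟨A, hA⟩ := ha
  refine ⟨2 * max A 0 / b p, ?_⟩
  filter_upwards [hb.eventually (lt_mem_nhds (half_lt_self hp)), self_mem_nhdsWithin]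
    with q hq hqK
  calc a q ≤ max A 0 := (hA (mem_image_of_mem a hqK)).trans (le_max_left A 0)
    _ ≤ 2 * max A 0 / b p * b q := by
      rw [div_mul_eq_mul_div, le_div_iff₀ hp]
      nlinarith [le_max_right A 0]

theorem IsCompact.exists_pos_forall_le {ι : Type*} [Finite ι] (hK : IsCompact K)
    {f : ι → X → ℝ} (hf : ∀ i, ContinuousOn (f i) K)
    (hpos : ∀ i, ∀ p ∈ K, 0 < f i p) : ∃ δ, 0 < δ ∧ ∀ i, ∀ p ∈ K, δ ≤ f i p := by
  have h (i : ι) : ∀ᶠ δ in 𝓝[>] (0 : ℝ), ∀ p ∈ K, δ ≤ f i p := by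
    obtain ⟨δ, hδ, hle⟩ := hK.exists_forall_le' (hf i) (hpos i)
    filter_upwards [Ioo_mem_nhdsGT hδ] with d hd p hp using hd.2.le.trans (hle p hp)
  obtain ⟨δ, hle, hδ⟩ := ((eventually_all.2 h).and eventually_mem_nhdsWithin).exists
  exact ⟨δ, hδ, hle⟩

theorem IsCompact.exists_infDist_le_mul_norm {E F G : Type*} [NormedAddCommGroup E]
    [InnerProductSpace ℝ E] [FiniteDimensional ℝ E] [NormedAddCommGroup F] [NormedSpace ℝ F]
    [NormedAddCommGroup G] [NormedSpace ℝ G] {K T : Set G} {Y : Set E} {f : G → E} {g : E → G}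
    (B : E →ₗ[ℝ] F) (hK : IsCompact K) (hf : ContinuousOn f K) (hfY : MapsTo f K Y)
    (hY : IsOpen Y) (hg : ContDiffOn ℝ 1 g Y) (hgf : ∀ p ∈ K, g (f p) = p)
    (hT : ∀ y ∈ Y, B y = 0 → g y ∈ T) :
    ∃ c, 0 ≤ c ∧ ∀ p ∈ K, infDist p T ≤ c * ‖B (f p)‖ := by
  obtain ⟨c₀, hc₀⟩ := B.exists_norm_sub_starProjection_ker_le
  refine hK.exists_forall_le_mul (fun p => norm_nonneg _) fun p hp => ?_
  have hY' : Y ∈ 𝓝 (f p) := hY.mem_nhds (hfY hp)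
  rcases (norm_nonneg (B (f p))).eq_or_lt with h0 | hpos
  · obtain ⟨L, hL⟩ := (hg.contDiffAt hY').exists_eventually_infDist_le_mul_norm_sub_starProjection
      (V := LinearMap.ker B) (norm_eq_zero.1 h0.symm)
      (by filter_upwards [hY'] with z hz using hT z hz)
    refine ⟨L * c₀, ?_⟩
    filter_upwards [(hf p hp).eventually hL, self_mem_nhdsWithin] with q hq hqK
    calc infDist q T = infDist (g (f q)) T := by rw [hgf q hqK]
      _ ≤ L * (c₀ * ‖B (f q)‖) := hq.trans (mul_le_mul_of_nonneg_left (hc₀ _) L.2)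
      _ = L * c₀ * ‖B (f q)‖ := by ring
  · exact (B.continuous_of_finiteDimensional.norm.continuousAt.comp_continuousWithinAt
      (hf p hp)).exists_eventually_le_mul_of_pos hpos
      (hK.bddAbove_image (continuous_infDist_pt T).continuousOn)

end DistanceEstimates

section Trajectories

theorem integral_eq_integral_add_sub_of_hasDerivWithinAt {φ ℓ q : ℝ → ℝ} {a b : ℝ} (hab : a ≤ b)
    (hφ : ∀ t ∈ Icc a b, HasDerivWithinAt φ (ℓ t - q t) (Icc a b) t)
    (hℓ : IntervalIntegrable ℓ MeasureTheory.volume a b)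
    (hq : IntervalIntegrable q MeasureTheory.volume a b) :
    ∫ t in a..b, q t = (∫ t in a..b, ℓ t) + (φ a - φ b) := by
  have hFTC := intervalIntegral.integral_eq_sub_of_hasDeriv_right_of_le hab
    (fun t ht => (hφ t ht).continuousWithinAt)
    (fun t ht => ((hφ t (Ioo_subset_Icc_self ht)).hasDerivAt
      (Icc_mem_nhds ht.1 ht.2)).hasDerivWithinAt) (hℓ.sub hq)
  rw [intervalIntegral.integral_sub hℓ hq] at hFTC
  linarith

variable {n N m : ℕ} {X : Set (EuclideanSpace ℝ (Fin n))} {H : EuclideanSpace ℝ (Fin n) → ℝ}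
  {Hx : EuclideanSpace ℝ (Fin n) → EuclideanSpace ℝ (Fin n)}
  {J0 : EuclideanSpace ℝ (Fin n) → Matrix (Fin n) (Fin n) ℝ} {J : Fin N → Matrix (Fin n) (Fin n) ℝ}
  {γ : Fin N → EuclideanSpace ℝ (Fin n) → ℝ}
  {g : EuclideanSpace ℝ (Fin n) → Matrix (Fin n) (Fin m) ℝ}
  {e : EuclideanSpace ℝ (Fin n)}

theorem riphs_integral_dissipation_eq (hH : ∀ p ∈ X, HasGradientAt H (Hx p) p)
    (hHx : ContinuousOn Hx X) (hJ0skew : ∀ p ∈ X, (J0 p)ᵀ = -(J0 p))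
    (hCasimir : ∀ p ∈ X, mv (J0 p) e = 0) (hJskew : ∀ k, (J k)ᵀ = -(J k))
    (hγ : ∀ k, ContinuousOn (γ k) X) (hg : ContinuousOn g X) (α c : ℝ) {tf : ℝ} (htf : 0 ≤ tf)
    {x x' : ℝ → EuclideanSpace ℝ (Fin n)} {u : ℝ → EuclideanSpace ℝ (Fin m)}
    (hu : ContinuousOn u (Icc 0 tf)) (hxX : ∀ t ∈ Icc 0 tf, x t ∈ X)
    (hx : ∀ t ∈ Icc 0 tf, HasDerivWithinAt x (x' t) (Icc 0 tf) t)
    (hode : ∀ t ∈ Icc 0 tf, x' t =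
      mv (J0 (x t) + ∑ k, (γ k (x t) * brk (J k) e (Hx (x t))) • J k) (Hx (x t))
        + mv (g (x t)) (u t)) :
    c * ∫ t in (0:ℝ)..tf, ∑ k, γ k (x t) * brk (J k) e (Hx (x t)) ^ 2
      = (∫ t in (0:ℝ)..tf, ⟪α • mv (g (x t))ᵀ (Hx (x t)) - c • mv (g (x t))ᵀ e, u t⟫)
        + ((α * H (x 0) - c * ⟪e, x 0⟫) - (α * H (x tf) - c * ⟪e, x tf⟫)) := by
  have hxc : ContinuousOn x (Icc 0 tf) := fun t ht => (hx t ht).continuousWithinAt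
  rw [← intervalIntegral.integral_const_mul]
  refine integral_eq_integral_add_sub_of_hasDerivWithinAt (φ := fun t => α * H (x t) - c * ⟪e, x t⟫)
    htf (fun t ht => ?_)
    (ContinuousOn.intervalIntegrable_of_Icc htf ?_) (ContinuousOn.intervalIntegrable_of_Icc htf ?_)
  · have hHt := (hasGradientAt_iff_hasFDerivAt.1 (hH _ (hxX t ht))).comp_hasDerivWithinAt t
      (hx t ht)
    have hSt := (innerSL ℝ e).hasFDerivAt.comp_hasDerivWithinAt t (hx t ht)
    have hφ : HasDerivWithinAt (fun τ => α * H (x τ) - c * ⟪e, x τ⟫)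
        (α * ⟪Hx (x t), x' t⟫ - c * ⟪e, x' t⟫) (Icc 0 tf) t :=
      (hHt.const_mul α).fun_sub (hSt.const_mul c)
    rwa [hode t ht, power_balance (hJ0skew _ (hxX t ht)) (hCasimir _ (hxX t ht)) hJskew] at hφ
  · fun_prop (disch := exact hxX)
  · fun_prop (disch := exact hxX)

end Trajectories

section Equilibria

variable {n N : ℕ}

/-- `𝒯` is the preimage under `H_x` of the kernel of this map. -/
noncomputable def brkMap (J : Fin N → Matrix (Fin n) (Fin n) ℝ) (e : EuclideanSpace ℝ (Fin n)) :
    EuclideanSpace ℝ (Fin n) →ₗ[ℝ] EuclideanSpace ℝ (Fin N) :=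
  (WithLp.linearEquiv 2 ℝ (Fin N → ℝ)).symm.toLinearMap ∘ₗ
    LinearMap.pi fun k => (innerSL ℝ e).toLinearMap ∘ₗ toEuclideanLin (J k)

variable {J : Fin N → Matrix (Fin n) (Fin n) ℝ} {e y : EuclideanSpace ℝ (Fin n)}

theorem brkMap_apply (k : Fin N) : brkMap J e y k = brk (J k) e y := rfl

theorem norm_brkMap_sq : ‖brkMap J e y‖ ^ 2 = ∑ k, brk (J k) e y ^ 2 :=
  EuclideanSpace.real_norm_sq_eq _

theorem brkMap_eq_zero_iff : brkMap J e y = 0 ↔ ∀ k, brk (J k) e y = 0 := by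
  simp only [← brkMap_apply, PiLp.ext_iff, PiLp.zero_apply]

theorem IsCompact.exists_infDist_sq_le_mul_sum_mul_brk_sq {X K T : Set (EuclideanSpace ℝ (Fin n))}
    {Hx Hinv : EuclideanSpace ℝ (Fin n) → EuclideanSpace ℝ (Fin n)}
    {γ : Fin N → EuclideanSpace ℝ (Fin n) → ℝ} (hK : IsCompact K) (hKX : K ⊆ X)
    (hHx : ContinuousOn Hx K) (hY : IsOpen (Hx '' X)) (hHinv : ContDiffOn ℝ 1 Hinv (Hx '' X))
    (hHinvHx : ∀ p ∈ X, Hinv (Hx p) = p) (hT : T = {p ∈ X | ∀ k, brk (J k) e (Hx p) = 0})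
    (hγ : ∀ k, ContinuousOn (γ k) K) (hγpos : ∀ k, ∀ p ∈ K, 0 < γ k p) :
    ∃ κ, 0 ≤ κ ∧ ∀ p ∈ K, infDist p T ^ 2 ≤ κ * ∑ k, γ k p * brk (J k) e (Hx p) ^ 2 := by
  obtain ⟨c, -, hdist⟩ := hK.exists_infDist_le_mul_norm (T := T) (brkMap J e) hHx
    (fun p hp => mem_image_of_mem Hx (hKX hp)) hY hHinv (fun p hp => hHinvHx p (hKX hp))
    (by rintro _ ⟨p, hp, rfl⟩ h; rw [hT, hHinvHx p hp]; exact ⟨hp, brkMap_eq_zero_iff.1 h⟩)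
  obtain ⟨δ, hδ, hγδ⟩ := hK.exists_pos_forall_le hγ hγpos
  refine ⟨c ^ 2 / δ, by positivity, fun p hp => ?_⟩
  have hsum : δ * ∑ k, brk (J k) e (Hx p) ^ 2 ≤ ∑ k, γ k p * brk (J k) e (Hx p) ^ 2 := by
    rw [Finset.mul_sum]
    exact Finset.sum_le_sum fun k _ => mul_le_mul_of_nonneg_right (hγδ k p hp) (sq_nonneg _)
  calc infDist p T ^ 2 ≤ (c * ‖brkMap J e (Hx p)‖) ^ 2 :=
        pow_le_pow_left₀ infDist_nonneg (hdist p hp) 2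
    _ = c ^ 2 / δ * (δ * ∑ k, brk (J k) e (Hx p) ^ 2) := by
        rw [mul_pow, norm_brkMap_sq]; field_simp
    _ ≤ c ^ 2 / δ * ∑ k, γ k p * brk (J k) e (Hx p) ^ 2 := by gcongr

end Equilibria

theorem integral_turnpike_estimate_general
    (n N m : ℕ)
    (X : Set (EuclideanSpace ℝ (Fin n)))
    -- H ∈ C², with gradient Hx and Hessian Hxx
    (H : EuclideanSpace ℝ (Fin n) → ℝ)
    (Hx : EuclideanSpace ℝ (Fin n) → EuclideanSpace ℝ (Fin n))
    (Hxx : EuclideanSpace ℝ (Fin n) → Matrix (Fin n) (Fin n) ℝ)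
    (hH : ∀ p ∈ X, HasGradientAt H (Hx p) p)
    (hHx : ∀ p ∈ X,
      HasFDerivAt Hx (LinearMap.toContinuousLinearMap (Matrix.toEuclideanLin (Hxx p))) p)
    -- 𝕐 = H_x(𝕏) is open and H_x : 𝕏 → 𝕐 is a C¹-diffeomorphism with inverse Hinv
    (hYopen : IsOpen (Hx '' X))
    (Hinv : EuclideanSpace ℝ (Fin n) → EuclideanSpace ℝ (Fin n))
    (hHinvleft : ∀ p ∈ X, Hinv (Hx p) = p)
    (hHinvC1 : ContDiffOn ℝ 1 Hinv (Hx '' X))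
    -- entropy S(x) = eᵀ x, e ≠ 0
    (e : EuclideanSpace ℝ (Fin n))
    -- Poisson structure matrix field J₀, with Casimir e
    (J0 : EuclideanSpace ℝ (Fin n) → Matrix (Fin n) (Fin n) ℝ)
    (hJ0skew : ∀ p ∈ X, (J0 p)ᵀ = -(J0 p))
    (hCasimir : ∀ p ∈ X, mv (J0 p) e = 0)
    -- skew-symmetric structure matrices and positive continuous γ_k
    (J : Fin N → Matrix (Fin n) (Fin n) ℝ)
    (hJskew : ∀ k, (J k)ᵀ = -(J k))
    (γ : Fin N → EuclideanSpace ℝ (Fin n) → ℝ)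
    (hγpos : ∀ k, ∀ p ∈ X, 0 < γ k p)
    (hγcont : ∀ k, ContinuousOn (γ k) X)
    -- continuous input matrix
    (g : EuclideanSpace ℝ (Fin n) → Matrix (Fin n) (Fin m) ℝ)
    (hgcont : ContinuousOn g X)
    -- the set of thermodynamic equilibria
    (T : Set (EuclideanSpace ℝ (Fin n)))
    (hT : T = {p ∈ X | ∀ k, brk (J k) e (Hx p) = 0})
    -- compact set, cost coefficients and cost bound
    (K : Set (EuclideanSpace ℝ (Fin n))) (hK : IsCompact K) (hKX : K ⊆ X)
    (α₁ α₂ T₀ : ℝ) (hα₂ : 0 < α₂) (hT₀ : 0 < T₀)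
    (C₁ : ℝ) :
    ∃ C : ℝ, 0 ≤ C ∧
      ∀ (tf : ℝ), 0 < tf →
      ∀ (x : ℝ → EuclideanSpace ℝ (Fin n)) (u : ℝ → EuclideanSpace ℝ (Fin m))
        (x' : ℝ → EuclideanSpace ℝ (Fin n)),
        ContinuousOn u (Icc 0 tf) →
        (∀ t ∈ Icc 0 tf, x t ∈ K) →
        ContinuousOn x' (Icc 0 tf) →
        (∀ t ∈ Icc 0 tf, HasDerivWithinAt x (x' t) (Icc 0 tf) t) →
        (∀ t ∈ Icc 0 tf,
          x' t =
            mv (J0 (x t) + ∑ k, (γ k (x t) * brk (J k) e (Hx (x t))) • J k) (Hx (x t))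
              + mv (g (x t)) (u t)) →
        (∫ t in (0:ℝ)..tf,
            (inner ℝ (α₁ • mv (g (x t))ᵀ (Hx (x t)) - (α₂ * T₀) • mv (g (x t))ᵀ e)
              (u t) : ℝ)) ≤ C₁ →
        (∫ t in (0:ℝ)..tf, infDist (x t) T ^ 2) ≤ C := by
  have hHxX : ContinuousOn Hx X := fun p hp => (hHx p hp).continuousAt.continuousWithinAt
  have hHK : ContinuousOn H K := fun p hp => (hH p (hKX hp)).continuousAt.continuousWithinAt
  obtain ⟨κ, hκ, hdist⟩ := hK.exists_infDist_sq_le_mul_sum_mul_brk_sq hKX (hHxX.mono hKX) hYopen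
    hHinvC1 hHinvleft hT (fun k => (hγcont k).mono hKX) fun k p hp => hγpos k p (hKX hp)
  obtain ⟨M, hM⟩ := hK.exists_bound_of_continuousOn
    (f := fun p => α₁ * H p - (α₂ * T₀) * ⟪e, p⟫) (by fun_prop)
  refine ⟨max (κ / (α₂ * T₀) * (C₁ + 2 * M)) 0, le_max_right _ _,
    fun tf htf x u x' hu hxK _ hx hode hcost => ?_⟩
  have hxX : ∀ t ∈ Icc 0 tf, x t ∈ X := fun t ht => hKX (hxK t ht)
  have hxc : ContinuousOn x (Icc 0 tf) := fun t ht => (hx t ht).continuousWithinAt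
  have hbal := riphs_integral_dissipation_eq hH hHxX hJ0skew hCasimir hJskew hγcont hgcont α₁
    (α₂ * T₀) htf.le hu hxX hx hode
  have hF0 := hM _ (hxK 0 ⟨le_rfl, htf.le⟩)
  have hFtf := hM _ (hxK tf ⟨htf.le, le_rfl⟩)
  rw [Real.norm_eq_abs, abs_le] at hF0 hFtf
  calc ∫ t in (0:ℝ)..tf, infDist (x t) T ^ 2
      ≤ ∫ t in (0:ℝ)..tf, κ * ∑ k, γ k (x t) * brk (J k) e (Hx (x t)) ^ 2 :=
        intervalIntegral.integral_mono_on htf.le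
          (ContinuousOn.intervalIntegrable_of_Icc htf.le (by fun_prop))
          (ContinuousOn.intervalIntegrable_of_Icc htf.le (by fun_prop (disch := exact hxX)))
          fun t ht => hdist _ (hxK t ht)
    _ = κ / (α₂ * T₀)
          * ((α₂ * T₀) * ∫ t in (0:ℝ)..tf, ∑ k, γ k (x t) * brk (J k) e (Hx (x t)) ^ 2) := by
        rw [intervalIntegral.integral_const_mul]
        field_simp
    _ ≤ κ / (α₂ * T₀) * (C₁ + 2 * M) := by
        gcongr
        linarith
    _ ≤ _ := le_max_left _ _

/-- Integral turnpike estimate towards the set of thermodynamic equilibria: for any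
compact `K ⊆ 𝕏` and cost bound `C₁`, there is `C ≥ 0` independent of the horizon such
that every solution of the RIPHS staying in `K` whose supply cost is at most `C₁`
satisfies `∫₀^{t_f} dist(x(t),𝒯)² dt ≤ C`. -/
theorem integral_turnpike_estimate
    (n N m : ℕ)
    (X : Set (EuclideanSpace ℝ (Fin n))) (hXopen : IsOpen X)
    -- H ∈ C², with gradient Hx and Hessian Hxx
    (H : EuclideanSpace ℝ (Fin n) → ℝ)
    (Hx : EuclideanSpace ℝ (Fin n) → EuclideanSpace ℝ (Fin n))
    (Hxx : EuclideanSpace ℝ (Fin n) → Matrix (Fin n) (Fin n) ℝ)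
    (hH : ∀ p ∈ X, HasGradientAt H (Hx p) p)
    (hHx : ∀ p ∈ X,
      HasFDerivAt Hx (LinearMap.toContinuousLinearMap (Matrix.toEuclideanLin (Hxx p))) p)
    (hHxxcont : ContinuousOn Hxx X)
    -- 𝕐 = H_x(𝕏) is open and H_x : 𝕏 → 𝕐 is a C¹-diffeomorphism with inverse Hinv
    (hYopen : IsOpen (Hx '' X))
    (Hinv : EuclideanSpace ℝ (Fin n) → EuclideanSpace ℝ (Fin n))
    (hHinvmaps : ∀ y ∈ Hx '' X, Hinv y ∈ X)
    (hHinvleft : ∀ p ∈ X, Hinv (Hx p) = p)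
    (hHinvC1 : ContDiffOn ℝ 1 Hinv (Hx '' X))
    -- entropy S(x) = eᵀ x, e ≠ 0
    (e : EuclideanSpace ℝ (Fin n)) (he : e ≠ 0)
    (S : EuclideanSpace ℝ (Fin n) → ℝ) (hS : ∀ p, S p = (inner ℝ e p : ℝ))
    -- Poisson structure matrix field J₀, with Casimir e
    (J0 : EuclideanSpace ℝ (Fin n) → Matrix (Fin n) (Fin n) ℝ)
    (hJ0cont : ContinuousOn J0 X)
    (hJ0skew : ∀ p ∈ X, (J0 p)ᵀ = -(J0 p))
    (hCasimir : ∀ p ∈ X, mv (J0 p) e = 0)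
    -- skew-symmetric structure matrices and positive continuous γ_k
    (J : Fin N → Matrix (Fin n) (Fin n) ℝ)
    (hJskew : ∀ k, (J k)ᵀ = -(J k))
    (γ : Fin N → EuclideanSpace ℝ (Fin n) → ℝ)
    (hγpos : ∀ k, ∀ p ∈ X, 0 < γ k p)
    (hγcont : ∀ k, ContinuousOn (γ k) X)
    -- continuous input matrix
    (g : EuclideanSpace ℝ (Fin n) → Matrix (Fin n) (Fin m) ℝ)
    (hgcont : ContinuousOn g X)
    -- V = ⋂_k (J_k e)^⊥ meets 𝕐
    (hVY : ({y : EuclideanSpace ℝ (Fin n) | ∀ k, (inner ℝ y (mv (J k) e) : ℝ) = 0}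
        ∩ (Hx '' X)).Nonempty)
    -- the set of thermodynamic equilibria
    (T : Set (EuclideanSpace ℝ (Fin n)))
    (hT : T = {p ∈ X | ∀ k, brk (J k) e (Hx p) = 0})
    -- compact set, cost coefficients and cost bound
    (K : Set (EuclideanSpace ℝ (Fin n))) (hK : IsCompact K) (hKX : K ⊆ X)
    (α₁ α₂ T₀ : ℝ) (hα₁ : 0 < α₁) (hα₂ : 0 < α₂) (hT₀ : 0 < T₀)
    (C₁ : ℝ) (hC₁ : 0 ≤ C₁) :
    ∃ C : ℝ, 0 ≤ C ∧
      ∀ (tf : ℝ), 0 < tf →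
      ∀ (x : ℝ → EuclideanSpace ℝ (Fin n)) (u : ℝ → EuclideanSpace ℝ (Fin m))
        (x' : ℝ → EuclideanSpace ℝ (Fin n)),
        ContinuousOn u (Icc 0 tf) →
        (∀ t ∈ Icc 0 tf, x t ∈ K) →
        ContinuousOn x' (Icc 0 tf) →
        (∀ t ∈ Icc 0 tf, HasDerivWithinAt x (x' t) (Icc 0 tf) t) →
        (∀ t ∈ Icc 0 tf,
          x' t =
            mv (J0 (x t) + ∑ k, (γ k (x t) * brk (J k) e (Hx (x t))) • J k) (Hx (x t))
              + mv (g (x t)) (u t)) →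
        (∫ t in (0:ℝ)..tf,
            (inner ℝ (α₁ • mv (g (x t))ᵀ (Hx (x t)) - (α₂ * T₀) • mv (g (x t))ᵀ e)
              (u t) : ℝ)) ≤ C₁ →
        (∫ t in (0:ℝ)..tf, infDist (x t) T ^ 2) ≤ C :=
  integral_turnpike_estimate_general n N m X H Hx Hxx hH hHx hYopen Hinv hHinvleft hHinvC1 e J0
    hJ0skew hCasimir J hJskew γ hγpos hγcont g hgcont T hT K hK hKX α₁ α₂ T₀ hα₂ hT₀ C₁
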